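/- Let $G \in \mathbb{R}^{D \times D}$ be invertible, $W \in \mathbb{R}^{D \times D}$ arbitrary, set $A = GG^{\top}$, and for $t > 0$ let $\Sigma(t) = (t^{-1}A^{-1} + t\, W^{\top} W)^{-1}$. Fix $x, y \in \mathbb{R}^{D}$, a vector $f \in \mathbb{R}^{D}$, and define the proposal mean $m(t) = \Sigma(t)\big(t^{-1} A^{-1} x + A^{-1} f + W^{\top} y\big)$. Then $\lim_{t \to 0^{+}} m(t) = x$ and $\lim_{t \to 0^{+}} t^{-1}\big(m(t) - x\big) = f + GG^{\top} W^{\top} y$. Consequently the optimal-proposal mean reduces, to first order in $t$, to $x + f\, t + t\, GG^{\top} W^{\top} y$. -/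

import Mathlib

/-!
Factoring `t⁻¹ A⁻¹ + t WᵀW = (t⁻¹ A⁻¹)(1 + t² A WᵀW)` turns the proposal mean into
`m(t) = (1 + t² B)⁻¹ (x + t d)` with `B = A WᵀW` and `d = f + A Wᵀ y`. Since
`x = (1 + t² B)⁻¹ (x + t² B x)`, also `t⁻¹ (m(t) - x) = (1 + t² B)⁻¹ (d - t B x)`,
and both right-hand sides are continuous at `t = 0`, where `(1 + t² B)⁻¹ = 1`.
-/

open Matrix Filter Topology

namespace Matrix

variable {n K : Type*} [Fintype n] [DecidableEq n] [Field K]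

theorem inv_smul_inv_add_smul {A : Matrix n n K} (hA : IsUnit A) (N : Matrix n n K) {t : K}
    (ht : t ≠ 0) : (t⁻¹ • A⁻¹ + t • N)⁻¹ = t • ((1 + t ^ 2 • (A * N))⁻¹ * A) := by
  have hAdet : IsUnit A.det := (isUnit_iff_isUnit_det A).mp hA
  have hfactor : t⁻¹ • A⁻¹ + t • N = (t⁻¹ • A⁻¹) * (1 + t ^ 2 • (A * N)) := by
    rw [Matrix.mul_add, Matrix.mul_one, Matrix.smul_mul, Matrix.mul_smul, ← Matrix.mul_assoc,
      nonsing_inv_mul A hAdet, Matrix.one_mul, smul_smul, sq, ← mul_assoc, inv_mul_cancel₀ ht,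
      one_mul]
  have hscaled : (t⁻¹ • A⁻¹)⁻¹ = t • A := by
    refine inv_eq_right_inv ?_
    rw [Matrix.smul_mul, Matrix.mul_smul, nonsing_inv_mul A hAdet, smul_smul, inv_mul_cancel₀ ht,
      one_smul]
  rw [hfactor, mul_inv_rev, hscaled, Matrix.mul_smul]

theorem inv_smul_inv_add_smul_mulVec {A : Matrix n n K} (hA : IsUnit A) (N : Matrix n n K)
    {t : K} (ht : t ≠ 0) (x f u : n → K) :
    (t⁻¹ • A⁻¹ + t • N)⁻¹ *ᵥ (t⁻¹ • A⁻¹ *ᵥ x + A⁻¹ *ᵥ f + u) =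
      (1 + t ^ 2 • (A * N))⁻¹ *ᵥ (x + t • (f + A *ᵥ u)) := by
  have hAdet : IsUnit A.det := (isUnit_iff_isUnit_det A).mp hA
  rw [inv_smul_inv_add_smul hA N ht, smul_mulVec, ← mulVec_mulVec, ← mulVec_smul]
  congr 1
  rw [mulVec_add, mulVec_add, mulVec_smul, mulVec_mulVec, mulVec_mulVec, mul_nonsing_inv A hAdet,
    one_mulVec, one_mulVec, smul_add, smul_add, smul_smul, mul_inv_cancel₀ ht, one_smul, smul_add,
    add_assoc]

theorem smul_inv_one_add_sq_smul_mulVec_sub {B : Matrix n n K} {t : K} (ht : t ≠ 0)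
    (hdet : IsUnit (1 + t ^ 2 • B).det) (x d : n → K) :
    t⁻¹ • ((1 + t ^ 2 • B)⁻¹ *ᵥ (x + t • d) - x) = (1 + t ^ 2 • B)⁻¹ *ᵥ (d - t • B *ᵥ x) := by
  have hx : x = (1 + t ^ 2 • B)⁻¹ *ᵥ ((1 + t ^ 2 • B) *ᵥ x) := by
    rw [mulVec_mulVec, nonsing_inv_mul _ hdet, one_mulVec]
  nth_rewrite 2 [hx]
  rw [← mulVec_sub, ← mulVec_smul]
  congr 1
  rw [add_mulVec, one_mulVec, smul_mulVec, add_sub_add_left_eq_sub, smul_sub, smul_smul,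
    smul_smul, inv_mul_cancel₀ ht, one_smul, sq, ← mul_assoc, inv_mul_cancel₀ ht, one_mul]

end Matrix

theorem Filter.Tendsto.matrix_inv {α n K : Type*} [Fintype n] [DecidableEq n] [Field K]
    [TopologicalSpace K] [IsTopologicalDivisionRing K] {l : Filter α}
    {M : α → Matrix n n K} {A : Matrix n n K} (hM : Tendsto M l (𝓝 A)) (hA : IsUnit A.det) :
    Tendsto (fun a => (M a)⁻¹) l (𝓝 A⁻¹) := by
  refine (continuousAt_matrix_inv A ?_).tendsto.comp hM
  rw [Ring.inverse_eq_inv']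
  exact continuousAt_inv₀ hA.ne_zero

theorem Filter.Tendsto.matrix_mulVec {α m n R : Type*} [Fintype n] [TopologicalSpace R]
    [NonUnitalNonAssocSemiring R] [ContinuousAdd R] [ContinuousMul R] {l : Filter α}
    {M : α → Matrix m n R} {v : α → n → R} {A : Matrix m n R} {w : n → R}
    (hM : Tendsto M l (𝓝 A)) (hv : Tendsto v l (𝓝 w)) :
    Tendsto (fun a => M a *ᵥ v a) l (𝓝 (A *ᵥ w)) :=
  ((continuous_fst.matrix_mulVec continuous_snd).tendsto (A, w)).comp (hM.prodMk_nhds hv)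

/-- With `A = G Gᵀ` (`G` invertible), `Σ(t) = (t⁻¹ A⁻¹ + t Wᵀ W)⁻¹`, and
the proposal mean `m(t) = Σ(t) (t⁻¹ A⁻¹ x + A⁻¹ f + Wᵀ y)`, we have `m(t) → x` and
`t⁻¹ (m(t) - x) → f + G Gᵀ Wᵀ y` as `t → 0⁺`. -/
theorem stmt3 {D : ℕ} (G W A : Matrix (Fin D) (Fin D) ℝ) (hG : IsUnit G)
    (hA : A = G * Gᵀ)
    (Sig : ℝ → Matrix (Fin D) (Fin D) ℝ)
    (hSig : ∀ t : ℝ, 0 < t → Sig t = (t⁻¹ • A⁻¹ + t • (Wᵀ * W))⁻¹)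
    (x y f : Fin D → ℝ)
    (m : ℝ → Fin D → ℝ)
    (hm : ∀ t : ℝ, 0 < t →
      m t = (Sig t).mulVec (t⁻¹ • A⁻¹.mulVec x + A⁻¹.mulVec f + Wᵀ.mulVec y)) :
    Tendsto m (𝓝[>] 0) (𝓝 x) ∧
      Tendsto (fun t : ℝ => t⁻¹ • (m t - x)) (𝓝[>] 0)
        (𝓝 (f + (G * Gᵀ * Wᵀ).mulVec y)) := by
  subst hA
  set B := G * Gᵀ * (Wᵀ * W)
  set M : ℝ → Matrix (Fin D) (Fin D) ℝ := fun t => 1 + t ^ 2 • B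
  set d := f + (G * Gᵀ) *ᵥ (Wᵀ *ᵥ y)
  have hpos : ∀ᶠ t in 𝓝[>] (0 : ℝ), 0 < t := self_mem_nhdsWithin
  have hM : Tendsto M (𝓝[>] 0) (𝓝 1) :=
    tendsto_nhdsWithin_of_tendsto_nhds <| (by fun_prop : Continuous M).tendsto' 0 1 (by simp [M])
  have hdet : ∀ᶠ t in 𝓝[>] (0 : ℝ), IsUnit (M t).det :=
    (((continuous_id.matrix_det.tendsto _).comp hM).eventually_ne (by simp)).mono
      fun _ => isUnit_iff_ne_zero.2
  have hmean : ∀ᶠ t in 𝓝[>] (0 : ℝ), m t = (M t)⁻¹ *ᵥ (x + t • d) :=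
    hpos.mono fun t ht => by
      rw [hm t ht, hSig t ht,
        inv_smul_inv_add_smul_mulVec (hG.mul ((isUnit_transpose G).2 hG)) _ ht.ne']
  have hslope : ∀ᶠ t in 𝓝[>] (0 : ℝ), t⁻¹ • (m t - x) = (M t)⁻¹ *ᵥ (d - t • B *ᵥ x) :=
    (hmean.and (hpos.and hdet)).mono fun t ⟨h, ht, hdt⟩ => by
      rw [h, smul_inv_one_add_sq_smul_mulVec_sub ht.ne' hdt]
  have hMinv : Tendsto (fun t => (M t)⁻¹) (𝓝[>] 0) (𝓝 1) := by
    simpa using hM.matrix_inv (by simp)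
  constructor
  · have hv : Tendsto (fun t : ℝ => x + t • d) (𝓝[>] 0) (𝓝 x) :=
      tendsto_nhdsWithin_of_tendsto_nhds <|
        (by fun_prop : Continuous fun t : ℝ => x + t • d).tendsto' 0 x (by simp)
    simpa using (hMinv.matrix_mulVec hv).congr' (hmean.mono fun _ h => h.symm)
  · have hv : Tendsto (fun t : ℝ => d - t • B *ᵥ x) (𝓝[>] 0) (𝓝 d) :=
      tendsto_nhdsWithin_of_tendsto_nhds <|
        (by fun_prop : Continuous fun t : ℝ => d - t • B *ᵥ x).tendsto' 0 d (by simp)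
    simpa [d, mulVec_mulVec] using
      (hMinv.matrix_mulVec hv).congr' (hslope.mono fun _ h => h.symm)
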